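/- arXiv:1306.0730 — 2 statements merged into one kernel-verified Lean document; each statement's English description precedes it below -/
import Mathlib

section
/- Let S ⊆ B(H)_sa be an invex set with respect to η : S × S → B(H)_sa satisfying condition C, and let f : ℝ → ℝ be continuous, nonnegative, and operator preinvex with respect to η on S. Then for every A, B ∈ S, every a, b ∈ (0,1) with a < b, and every x ∈ H with ‖x‖ = 1, the following inequality holds: |(1/2)∫₀ᵃ ⟨f(A + sη(B,A))x, x⟩ ds + (1/2)∫₀ᵇ ⟨f(A + sη(B,A))x, x⟩ ds − (1/(b−a))∫ₐᵇ (∫₀ᵗ ⟨f(A + sη(B,A))x, x⟩ ds) dt| ≤ ((b−a)/8)·[⟨f(A + aη(B,A))x, x⟩ + ⟨f(A + bη(B,A))x, x⟩]. -/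
/-!
Condition C gives `η(A + t₁η(B,A), A + t₂η(B,A)) = (t₁ - t₂)η(B,A)` for `t₁ ≤ t₂`, so preinvexity
of `f` says exactly that `t ↦ f(A + tη(B,A))` is convex on `[0,1]` in the operator order. The
monotone real-linear functional `T ↦ re⟪Tx, x⟫` turns it into a nonnegative convex function `g`.
Integration by parts writes the left-hand side as `(b-a)⁻¹ ∫ₐᵇ (t - (a+b)/2) g(t) dt`, and
averaging with the reflection `t ↦ a + b - t`, using `g(t) + g(a+b-t) ≤ g(a) + g(b)`, bounds it by
`(b-a)⁻¹ (g(a) + g(b))/2 ∫ₐᵇ |t - (a+b)/2| dt = (b-a)(g(a) + g(b))/8`.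
-/

open scoped InnerProductSpace

open MeasureTheory Set intervalIntegral

section Preinvex

variable {E β : Type*} [AddCommGroup E] [Module ℝ E]

def IsInvex (S : Set E) (η : E → E → E) : Prop :=
  ∀ A ∈ S, ∀ B ∈ S, ∀ t ∈ Icc (0:ℝ) 1, A + t • η B A ∈ S

def SatisfiesConditionC (S : Set E) (η : E → E → E) : Prop :=
  (∀ A ∈ S, ∀ B ∈ S, ∀ t ∈ Icc (0:ℝ) 1, η A (A + t • η B A) = (-t) • η B A) ∧
    ∀ A ∈ S, ∀ B ∈ S, ∀ t ∈ Icc (0:ℝ) 1, η B (A + t • η B A) = (1 - t) • η B A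

def PreinvexOn [AddCommMonoid β] [PartialOrder β] [SMul ℝ β]
    (S : Set E) (η : E → E → E) (φ : E → β) : Prop :=
  ∀ A ∈ S, ∀ B ∈ S, ∀ t ∈ Icc (0:ℝ) 1, φ (A + t • η B A) ≤ (1 - t) • φ A + t • φ B

variable {S : Set E} {η : E → E → E} {A B : E}

theorem SatisfiesConditionC.eta_add_smul_add_smul (hS : IsInvex S η)
    (hη : SatisfiesConditionC S η) (hA : A ∈ S) (hB : B ∈ S) {t₁ t₂ : ℝ}
    (ht₁ : t₁ ∈ Icc (0:ℝ) 1) (ht₂ : t₂ ∈ Icc (0:ℝ) 1) (h₁₂ : t₁ ≤ t₂) :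
    η (A + t₁ • η B A) (A + t₂ • η B A) = (t₁ - t₂) • η B A := by
  set s := (t₂ - t₁) / (1 - t₁)
  have hs : s * (1 - t₁) = t₂ - t₁ :=
    div_mul_cancel_of_imp fun h => by linarith [ht₂.2]
  have hs01 : s ∈ Icc (0:ℝ) 1 := by
    rcases ht₁.2.eq_or_lt with h | h
    · simp [s, h]
    · exact ⟨div_nonneg (by linarith) (by linarith),
        (div_le_one (by linarith)).2 (by linarith [ht₂.2])⟩
  have hηB : η B (A + t₁ • η B A) = (1 - t₁) • η B A := hη.2 A hA B hB t₁ ht₁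
  have hstep : A + t₂ • η B A = (A + t₁ • η B A) + s • η B (A + t₁ • η B A) := by
    rw [hηB, smul_smul, hs]
    module
  rw [hstep, hη.1 _ (hS A hA B hB t₁ ht₁) B hB s hs01, hηB, smul_smul, neg_mul, hs]
  module

theorem PreinvexOn.convexOn_Icc [AddCommMonoid β] [PartialOrder β] [Module ℝ β] {φ : E → β}
    (hφ : PreinvexOn S η φ) (hS : IsInvex S η) (hη : SatisfiesConditionC S η)
    (hA : A ∈ S) (hB : B ∈ S) :
    ConvexOn ℝ (Icc 0 1) fun t : ℝ => φ (A + t • η B A) := by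
  refine LinearOrder.convexOn_of_lt (convex_Icc 0 1) fun x hx y hy hxy a b ha hb hab => ?_
  have h := hφ _ (hS A hA B hB y hy) _ (hS A hA B hB x hx) a ⟨ha.le, by linarith⟩
  rw [hη.eta_add_smul_add_smul hS hA hB hx hy hxy.le, show 1 - a = b by linarith] at h
  have hpt : A + (a • x + b • y) • η B A = A + y • η B A + a • (x - y) • η B A := by
    rw [eq_sub_of_add_eq' hab]
    module
  rwa [hpt, add_comm (a • φ _)]

end Preinvex

theorem ConvexOn.monotone_linearMap_comp {𝕜 E β γ : Type*} [Semiring 𝕜] [PartialOrder 𝕜]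
    [AddCommMonoid E] [SMul 𝕜 E] [AddCommMonoid β] [PartialOrder β] [Module 𝕜 β]
    [AddCommMonoid γ] [PartialOrder γ] [Module 𝕜 γ] {s : Set E} {f : E → β}
    (hf : ConvexOn 𝕜 s f) (ψ : β →ₗ[𝕜] γ) (hψ : Monotone ψ) : ConvexOn 𝕜 s (ψ ∘ f) :=
  ⟨hf.1, fun x hx y hy a b ha hb hab => by
    simpa using hψ (hf.2 hx hy ha hb hab)⟩

namespace ContinuousLinearMap

theorem monotone_reApplyInnerSelf {𝕜 E : Type*} [RCLike 𝕜] [NormedAddCommGroup E]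
    [InnerProductSpace 𝕜 E] (x : E) : Monotone fun T : E →L[𝕜] E => T.reApplyInnerSelf x := by
  intro P Q h
  have := ((le_def P Q).1 h).re_inner_nonneg_left x
  simpa only [reApplyInnerSelf_apply, sub_apply, inner_sub_left, map_sub, sub_nonneg] using this

variable {H : Type*} [NormedAddCommGroup H] [InnerProductSpace ℂ H]

noncomputable def reApplyInnerSelfₗ (x : H) : (H →L[ℂ] H) →ₗ[ℝ] ℝ where
  toFun T := T.reApplyInnerSelf x
  map_add' P Q := by simp only [reApplyInnerSelf_apply, add_apply, inner_add_left, map_add]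
  map_smul' r P := by
    simp only [reApplyInnerSelf_apply, smul_apply, RCLike.real_smul_eq_coe_smul (K := ℂ),
      inner_smul_real_left, RCLike.re_ofReal_mul, RingHom.id_apply, smul_eq_mul]

end ContinuousLinearMap

section HermiteHadamard

variable {g : ℝ → ℝ} {a b : ℝ}

theorem ConvexOn.apply_add_apply_add_sub_le (hg : ConvexOn ℝ (Icc a b) g) {t : ℝ}
    (ht : t ∈ Icc a b) : g t + g (a + b - t) ≤ g a + g b := by
  rcases (ht.1.trans ht.2).eq_or_lt with rfl | hab
  · obtain rfl : t = a := le_antisymm ht.2 ht.1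
    simp
  have hba : 0 < b - a := sub_pos.2 hab
  have hwa : 0 ≤ (b - t) / (b - a) := div_nonneg (sub_nonneg.2 ht.2) hba.le
  have hwb : 0 ≤ (t - a) / (b - a) := div_nonneg (sub_nonneg.2 ht.1) hba.le
  have hsum : (b - t) / (b - a) + (t - a) / (b - a) = 1 := by field_simp; ring
  have ha := left_mem_Icc.2 hab.le
  have hb := right_mem_Icc.2 hab.le
  have h₁ := hg.2 ha hb hwa hwb hsum
  have h₂ := hg.2 ha hb hwb hwa ((add_comm _ _).trans hsum)
  simp only [smul_eq_mul] at h₁ h₂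
  rw [show (b - t) / (b - a) * a + (t - a) / (b - a) * b = t by field_simp; ring] at h₁
  rw [show (t - a) / (b - a) * a + (b - t) / (b - a) * b = a + b - t by field_simp; ring] at h₂
  calc g t + g (a + b - t) ≤ _ := add_le_add h₁ h₂
    _ = g a + g b := by field_simp; ring

theorem ConvexOn.intervalIntegrable_of_nonneg (hg : ConvexOn ℝ (Icc a b) g)
    (hnn : ∀ t ∈ Icc a b, 0 ≤ g t) (hab : a ≤ b) : IntervalIntegrable g volume a b := by
  rw [intervalIntegrable_iff_integrableOn_Icc_of_le hab, integrableOn_Icc_iff_integrableOn_Ioo]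
  have hcont : ContinuousOn g (Ioo a b) := by simpa using hg.continuousOn_interior
  refine IntegrableOn.of_bound measure_Ioo_lt_top (hcont.aestronglyMeasurable measurableSet_Ioo)
    (max (g a) (g b)) ((ae_restrict_iff' measurableSet_Ioo).2 (.of_forall fun t ht => ?_))
  have ht' : t ∈ Icc a b := Ioo_subset_Icc_self ht
  rw [Real.norm_eq_abs, abs_of_nonneg (hnn t ht')]
  exact hg.le_on_segment (left_mem_Icc.2 hab) (right_mem_Icc.2 hab) (by rwa [segment_eq_Icc hab])

theorem integral_abs_sub_midpoint (hab : a ≤ b) :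
    ∫ t in a..b, |t - (a + b) / 2| = (b - a) ^ 2 / 4 := by
  set m := (a + b) / 2 with hm
  have hcont : Continuous fun t => |t - m| := by fun_prop
  have hleft : ∫ t in a..m, |t - m| = ∫ t in a..m, (m - t) := by
    refine integral_congr fun t ht => ?_
    rw [uIcc_of_le (by linarith)] at ht
    rw [abs_of_nonpos (by linarith [ht.2]), neg_sub]
  have hright : ∫ t in m..b, |t - m| = ∫ t in m..b, (t - m) := by
    refine integral_congr fun t ht => ?_
    rw [uIcc_of_le (by linarith)] at ht
    exact abs_of_nonneg (by linarith [ht.1])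
  rw [← integral_add_adjacent_intervals (hcont.intervalIntegrable a m)
    (hcont.intervalIntegrable m b), hleft, hright]
  simp only [integral_comp_sub_left fun t => t, integral_comp_sub_right fun t => t, integral_id]
  ring

theorem ConvexOn.abs_integral_sub_midpoint_mul_le (hg : ConvexOn ℝ (Icc a b) g)
    (hnn : ∀ t ∈ Icc a b, 0 ≤ g t) (hab : a ≤ b) :
    |∫ t in a..b, (t - (a + b) / 2) * g t| ≤ (b - a) ^ 2 / 8 * (g a + g b) := by
  set m := (a + b) / 2
  have hweight : ContinuousOn (fun t => |t - m|) (uIcc a b) := by fun_prop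
  have hgi : IntervalIntegrable g volume a b := hg.intervalIntegrable_of_nonneg hnn hab
  have hgi' : IntervalIntegrable (fun t => g (a + b - t)) volume a b := by
    simpa using (hgi.comp_sub_left (a + b)).symm
  have hreflect : ∫ t in a..b, |t - m| * g (a + b - t) = ∫ t in a..b, |t - m| * g t := by
    have h := integral_comp_sub_left (a := a) (b := b) (fun t => |t - m| * g t) (a + b)
    simp only [add_sub_cancel_right, add_sub_cancel_left] at h
    rw [← h]
    refine integral_congr fun t _ => ?_
    rw [show a + b - t - m = -(t - m) by ring, abs_neg]
  calc |∫ t in a..b, (t - m) * g t|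
      ≤ ∫ t in a..b, |(t - m) * g t| := abs_integral_le_integral_abs hab
    _ = ∫ t in a..b, |t - m| * g t := integral_congr fun t ht => by
        rw [uIcc_of_le hab] at ht
        rw [abs_mul, abs_of_nonneg (hnn t ht)]
    _ = 2⁻¹ * ∫ t in a..b, |t - m| * (g t + g (a + b - t)) := by
        simp only [mul_add]
        rw [integral_add (hgi.continuousOn_mul hweight) (hgi'.continuousOn_mul hweight), hreflect]
        ring
    _ ≤ 2⁻¹ * ∫ t in a..b, |t - m| * (g a + g b) := by
        gcongr
        refine integral_mono_on hab ((hgi.add hgi').continuousOn_mul hweight)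
          (hweight.intervalIntegrable.mul_const _) fun t ht => ?_
        exact mul_le_mul_of_nonneg_left (hg.apply_add_apply_add_sub_le ht) (abs_nonneg _)
    _ = (b - a) ^ 2 / 8 * (g a + g b) := by
        rw [intervalIntegral.integral_mul_const, integral_abs_sub_midpoint hab]
        ring

theorem trapezoid_sub_average_eq_integral {G : ℝ → ℝ} (hab : a ≠ b)
    (hG : ∀ t ∈ uIcc a b, HasDerivAt G (g t) t) (hg : IntervalIntegrable g volume a b) :
    2⁻¹ * G a + 2⁻¹ * G b - (b - a)⁻¹ * ∫ t in a..b, G t =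
      (b - a)⁻¹ * ∫ t in a..b, (t - (a + b) / 2) * g t := by
  have hsub : b - a ≠ 0 := sub_ne_zero.2 hab.symm
  have hparts := integral_mul_deriv_eq_deriv_mul (u := fun t => t - (a + b) / 2)
    (fun t _ => (hasDerivAt_id t).sub_const _) hG intervalIntegrable_const hg
  simp only [one_mul] at hparts
  rw [hparts]
  field_simp
  ring

theorem ConvexOn.abs_trapezoid_sub_average_integral_le {p q : ℝ} (hg : ConvexOn ℝ (Icc p q) g)
    (hnn : ∀ t ∈ Icc p q, 0 ≤ g t) (hpa : p < a) (hab : a < b) (hbq : b < q) :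
    |2⁻¹ * (∫ s in p..a, g s) + 2⁻¹ * (∫ s in p..b, g s) -
        (b - a)⁻¹ * ∫ t in a..b, ∫ s in p..t, g s| ≤ (b - a) / 8 * (g a + g b) := by
  have hcont : ContinuousOn g (Ioo p q) := by simpa using hg.continuousOn_interior
  have hsub {c d : ℝ} (hc : p ≤ c) (hd : d ≤ q) : ConvexOn ℝ (Icc c d) g :=
    hg.subset (Icc_subset_Icc hc hd) (convex_Icc c d)
  have hnn' {c d : ℝ} (hc : p ≤ c) (hd : d ≤ q) : ∀ t ∈ Icc c d, 0 ≤ g t :=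
    fun t ht => hnn t ⟨hc.trans ht.1, ht.2.trans hd⟩
  have hderiv : ∀ t ∈ uIcc a b, HasDerivAt (fun u => ∫ s in p..u, g s) (g t) t := by
    intro t ht
    rw [uIcc_of_le hab.le] at ht
    have htI : t ∈ Ioo p q := ⟨hpa.trans_le ht.1, ht.2.trans_lt hbq⟩
    exact integral_hasDerivAt_right
      ((hsub le_rfl htI.2.le).intervalIntegrable_of_nonneg (hnn' le_rfl htI.2.le) htI.1.le)
      (hcont.stronglyMeasurableAtFilter isOpen_Ioo t htI)
      (hcont.continuousAt (isOpen_Ioo.mem_nhds htI))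
  have hba : 0 < b - a := sub_pos.2 hab
  rw [trapezoid_sub_average_eq_integral hab.ne hderiv
      ((hsub hpa.le hbq.le).intervalIntegrable_of_nonneg (hnn' hpa.le hbq.le) hab.le),
    abs_mul, abs_inv, abs_of_pos hba]
  calc (b - a)⁻¹ * |∫ t in a..b, (t - (a + b) / 2) * g t|
      ≤ (b - a)⁻¹ * ((b - a) ^ 2 / 8 * (g a + g b)) := by
        gcongr
        exact (hsub hpa.le hbq.le).abs_integral_sub_midpoint_mul_le (hnn' hpa.le hbq.le) hab.le
    _ = (b - a) / 8 * (g a + g b) := by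
        field_simp

end HermiteHadamard

theorem dragomir_agarwal_operator_preinvex_inner_general
    {H : Type*} [NormedAddCommGroup H] [InnerProductSpace ℂ H] [CompleteSpace H]
    (S : Set (H →L[ℂ] H))
    (η : (H →L[ℂ] H) → (H →L[ℂ] H) → (H →L[ℂ] H))
    (hinvex : ∀ A ∈ S, ∀ B ∈ S, ∀ t ∈ Set.Icc (0:ℝ) 1, A + t • η B A ∈ S)
    (hC1 : ∀ A ∈ S, ∀ B ∈ S, ∀ t ∈ Set.Icc (0:ℝ) 1,
      η A (A + t • η B A) = (-t) • η B A)
    (hC2 : ∀ A ∈ S, ∀ B ∈ S, ∀ t ∈ Set.Icc (0:ℝ) 1,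
      η B (A + t • η B A) = (1 - t) • η B A)
    (f : ℝ → ℝ) (hfnonneg : ∀ t : ℝ, 0 ≤ f t)
    (hpreinvex : ∀ A ∈ S, ∀ B ∈ S, ∀ t ∈ Set.Icc (0:ℝ) 1,
      cfc f (A + t • η B A) ≤ (1 - t) • cfc f A + t • cfc f B) :
    ∀ A ∈ S, ∀ B ∈ S, ∀ a ∈ Set.Ioo (0:ℝ) 1, ∀ b ∈ Set.Ioo (0:ℝ) 1, a < b →
      ∀ x : H, ‖x‖ = 1 →
      |(2:ℝ)⁻¹ * (∫ s in (0:ℝ)..a, RCLike.re ⟪(cfc f (A + s • η B A)) x, x⟫_ℂ) +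
        (2:ℝ)⁻¹ * (∫ s in (0:ℝ)..b, RCLike.re ⟪(cfc f (A + s • η B A)) x, x⟫_ℂ) -
        (b - a)⁻¹ * ∫ t in a..b,
          (∫ s in (0:ℝ)..t, RCLike.re ⟪(cfc f (A + s • η B A)) x, x⟫_ℂ)| ≤
      (b - a) / 8 *
        (RCLike.re ⟪(cfc f (A + a • η B A)) x, x⟫_ℂ +
          RCLike.re ⟪(cfc f (A + b • η B A)) x, x⟫_ℂ) := by
  intro A hA B hB a ha b hb hab x _
  have hconvex : ConvexOn ℝ (Icc 0 1) fun t : ℝ => (cfc f (A + t • η B A)).reApplyInnerSelf x :=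
    (PreinvexOn.convexOn_Icc hpreinvex hinvex ⟨hC1, hC2⟩ hA hB).monotone_linearMap_comp
      (ContinuousLinearMap.reApplyInnerSelfₗ x) (ContinuousLinearMap.monotone_reApplyInnerSelf x)
  have hnonneg : ∀ t ∈ Icc (0:ℝ) 1, 0 ≤ (cfc f (A + t • η B A)).reApplyInnerSelf x :=
    fun t _ => by
      simpa [ContinuousLinearMap.reApplyInnerSelf_apply] using
        ContinuousLinearMap.monotone_reApplyInnerSelf x
          (cfc_nonneg (a := A + t • η B A) fun y _ => hfnonneg y)
  exact hconvex.abs_trapezoid_sub_average_integral_le hnonneg ha.1 hab hb.2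

/-- An estimate of Hermite–Hadamard type for the scalar-valued function
`s ↦ ⟨f(A + sη(B,A))x, x⟩` attached to an operator preinvex nonnegative function `f`. -/
theorem dragomir_agarwal_operator_preinvex_inner
    {H : Type*} [NormedAddCommGroup H] [InnerProductSpace ℂ H] [CompleteSpace H]
    (S : Set (H →L[ℂ] H)) (hSsa : ∀ A ∈ S, IsSelfAdjoint A)
    (η : (H →L[ℂ] H) → (H →L[ℂ] H) → (H →L[ℂ] H))
    (hinvex : ∀ A ∈ S, ∀ B ∈ S, ∀ t ∈ Set.Icc (0:ℝ) 1, A + t • η B A ∈ S)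
    (hC1 : ∀ A ∈ S, ∀ B ∈ S, ∀ t ∈ Set.Icc (0:ℝ) 1,
      η A (A + t • η B A) = (-t) • η B A)
    (hC2 : ∀ A ∈ S, ∀ B ∈ S, ∀ t ∈ Set.Icc (0:ℝ) 1,
      η B (A + t • η B A) = (1 - t) • η B A)
    (f : ℝ → ℝ) (hf : Continuous f) (hfnonneg : ∀ t : ℝ, 0 ≤ f t)
    (hpreinvex : ∀ A ∈ S, ∀ B ∈ S, ∀ t ∈ Set.Icc (0:ℝ) 1,
      cfc f (A + t • η B A) ≤ (1 - t) • cfc f A + t • cfc f B) :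
    ∀ A ∈ S, ∀ B ∈ S, ∀ a ∈ Set.Ioo (0:ℝ) 1, ∀ b ∈ Set.Ioo (0:ℝ) 1, a < b →
      ∀ x : H, ‖x‖ = 1 →
      |(2:ℝ)⁻¹ * (∫ s in (0:ℝ)..a, RCLike.re ⟪(cfc f (A + s • η B A)) x, x⟫_ℂ) +
        (2:ℝ)⁻¹ * (∫ s in (0:ℝ)..b, RCLike.re ⟪(cfc f (A + s • η B A)) x, x⟫_ℂ) -
        (b - a)⁻¹ * ∫ t in a..b,
          (∫ s in (0:ℝ)..t, RCLike.re ⟪(cfc f (A + s • η B A)) x, x⟫_ℂ)| ≤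
      (b - a) / 8 *
        (RCLike.re ⟪(cfc f (A + a • η B A)) x, x⟫_ℂ +
          RCLike.re ⟪(cfc f (A + b • η B A)) x, x⟫_ℂ) :=
  dragomir_agarwal_operator_preinvex_inner_general S η hinvex hC1 hC2 f hfnonneg hpreinvex
end

section
/- Let f : I → ℝ be a continuous operator convex function on an interval I ⊆ ℝ. Then for any bounded selfadjoint operators A and B on a complex Hilbert space H with spectra contained in I, the following chain of inequalities holds in the operator order: f((A + B)/2) ≤ (1/2)[f((3A + B)/4) + f((A + 3B)/4)] ≤ ∫₀¹ f((1−t)A + tB) dt ≤ (1/2)[f((A + B)/2) + (f(A) + f(B))/2] ≤ (f(A) + f(B))/2. -/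
/-!
Operator convexity at `λ = 1/2` gives the first and the last inequality. Averaging the midpoint
inequality over the pairs of points with parameters `t` and `1 - t` on the segment from `a` to `b`
gives the operator Hermite–Hadamard inequality
`f((a+b)/2) ≤ ∫₀¹ f((1-t)a + tb) dt ≤ (f(a) + f(b))/2`; applied to the two halves of the segment
from `A` to `B`, whose integrals average to the integral over the whole segment, it gives the two
middle inequalities. Operator-valued integrals can be compared pointwise because the positive cone
of a C⋆-algebra is closed, and `t ↦ f((1-t)a + tb)` is continuous because all the spectra along
the segment lie in one compact interval `[m, M] ⊆ I`, on which `f` is continuous.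
-/

open MeasureTheory Set

theorem Set.OrdConnected.exists_Icc_subset_of_isCompact {I K : Set ℝ} (hI : I.OrdConnected)
    (hK : IsCompact K) (hKI : K ⊆ I) : ∃ m M, Icc m M ⊆ I ∧ K ⊆ Icc m M := by
  rcases K.eq_empty_or_nonempty with rfl | hne
  · exact ⟨1, 0, by simp, empty_subset _⟩
  · exact ⟨sInf K, sSup K, hI.out (hKI (hK.sInf_mem hne)) (hKI (hK.sSup_mem hne)),
      hK.isBounded.subset_Icc_sInf_sSup⟩

theorem intervalIntegral.integral_mono_on_of_isOrderedModule {E : Type*}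
    [NormedAddCommGroup E] [NormedSpace ℝ E] [PartialOrder E] [IsOrderedAddMonoid E]
    [IsOrderedModule ℝ E] [ClosedIciTopology E] {μ : Measure ℝ} {f g : ℝ → E} {a b : ℝ}
    (hab : a ≤ b) (hf : IntervalIntegrable f μ a b) (hg : IntervalIntegrable g μ a b)
    (h : ∀ x ∈ Icc a b, f x ≤ g x) : ∫ x in a..b, f x ∂μ ≤ ∫ x in a..b, g x ∂μ := by
  simpa only [intervalIntegral.integral_of_le hab] using
    setIntegral_mono_on hf.1 hg.1 measurableSet_Ioc fun x hx => h x (Ioc_subset_Icc_self hx)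

section Segment

variable {E : Type*} [NormedAddCommGroup E] [NormedSpace ℝ E]

theorem integral_convexCombo [CompleteSpace E] (x y : E) :
    ∫ t in (0:ℝ)..1, ((1 - t) • x + t • y) = (2:ℝ)⁻¹ • (x + y) := by
  rw [intervalIntegral.integral_add ((by fun_prop : Continuous _).intervalIntegrable _ _)
      ((by fun_prop : Continuous _).intervalIntegrable _ _),
    intervalIntegral.integral_smul_const, intervalIntegral.integral_smul_const,
    intervalIntegral.integral_comp_sub_left (fun t : ℝ => t)]
  norm_num

theorem integral_comp_convexCombo_eq_halves {V : Type*} [AddCommGroup V] [Module ℝ V]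
    (φ : V → E) (a b : V)
    (hφ : IntervalIntegrable (fun t : ℝ => φ ((1 - t) • a + t • b)) volume 0 1) :
    ∫ t in (0:ℝ)..1, φ ((1 - t) • a + t • b) =
      (2:ℝ)⁻¹ • (∫ t in (0:ℝ)..1, φ ((1 - t) • a + t • ((2:ℝ)⁻¹ • (a + b)))) +
      (2:ℝ)⁻¹ • ∫ t in (0:ℝ)..1, φ ((1 - t) • ((2:ℝ)⁻¹ • (a + b)) + t • b) := by
  set g : ℝ → E := fun t => φ ((1 - t) • a + t • b)
  have hleft : ∫ t in (0:ℝ)..1, φ ((1 - t) • a + t • ((2:ℝ)⁻¹ • (a + b))) =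
      ∫ t in (0:ℝ)..1, g (t / 2) :=
    intervalIntegral.integral_congr fun t _ => by simp only [g]; congr 1; module
  have hright : ∫ t in (0:ℝ)..1, φ ((1 - t) • ((2:ℝ)⁻¹ • (a + b)) + t • b) =
      ∫ t in (0:ℝ)..1, g (t / 2 + 2⁻¹) :=
    intervalIntegral.integral_congr fun t _ => by simp only [g]; congr 1; module
  rw [hleft, hright, intervalIntegral.inv_smul_integral_comp_div,
    intervalIntegral.inv_smul_integral_comp_div_add]
  norm_num
  have hsub : ∀ c d : ℝ, c ∈ Icc (0:ℝ) 1 → d ∈ Icc (0:ℝ) 1 → uIcc c d ⊆ uIcc 0 1 :=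
    fun c d hc hd => by
      rw [uIcc_of_le zero_le_one]
      exact uIcc_subset_Icc hc hd
  exact (intervalIntegral.integral_add_adjacent_intervals
    (hφ.mono_set (hsub 0 (1 / 2) (by norm_num) (by norm_num)))
    (hφ.mono_set (hsub (1 / 2) 1 (by norm_num) (by norm_num)))).symm

end Segment

def IsOperatorConvexOn (A : Type*) [CStarAlgebra A] [PartialOrder A] (I : Set ℝ) (f : ℝ → ℝ) :
    Prop :=
  ∀ a b : A, IsSelfAdjoint a → IsSelfAdjoint b → spectrum ℝ a ⊆ I → spectrum ℝ b ⊆ I →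
    ∀ lam ∈ Icc (0:ℝ) 1, cfc f ((1 - lam) • a + lam • b) ≤ (1 - lam) • cfc f a + lam • cfc f b

theorem IsSelfAdjoint.convexCombo {A : Type*} [AddCommGroup A] [StarAddMonoid A] [Module ℝ A]
    [StarModule ℝ A] {a b : A} (ha : IsSelfAdjoint a) (hb : IsSelfAdjoint b) (t : ℝ) :
    IsSelfAdjoint ((1 - t) • a + t • b) :=
  ((IsSelfAdjoint.all _).smul ha).add ((IsSelfAdjoint.all _).smul hb)

section CStarAlgebra

variable {A : Type*} [CStarAlgebra A] {a b : A}

theorem exists_Icc_subset_of_spectrum_subset {I : Set ℝ} (hI : I.OrdConnected)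
    (hsa : spectrum ℝ a ⊆ I) (hsb : spectrum ℝ b ⊆ I) :
    ∃ m M, Icc m M ⊆ I ∧ spectrum ℝ a ⊆ Icc m M ∧ spectrum ℝ b ⊆ Icc m M := by
  obtain ⟨m, M, hmI, hab⟩ := hI.exists_Icc_subset_of_isCompact
    ((spectrum.isCompact a).union (spectrum.isCompact b)) (union_subset hsa hsb)
  exact ⟨m, M, hmI, union_subset_iff.mp hab⟩

variable [PartialOrder A] [StarOrderedRing A]

theorem spectrum_subset_Icc_iff (ha : IsSelfAdjoint a) {m M : ℝ} :
    spectrum ℝ a ⊆ Icc m M ↔ a ∈ Icc (algebraMap ℝ A m) (algebraMap ℝ A M) := by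
  rw [mem_Icc, algebraMap_le_iff_le_spectrum ha, le_algebraMap_iff_spectrum_le ha]
  exact ⟨fun h => ⟨fun x hx => (h hx).1, fun x hx => (h hx).2⟩,
    fun h x hx => ⟨h.1 x hx, h.2 x hx⟩⟩

theorem spectrum_convexCombo_subset_Icc (ha : IsSelfAdjoint a) (hb : IsSelfAdjoint b) {m M : ℝ}
    (hsa : spectrum ℝ a ⊆ Icc m M) (hsb : spectrum ℝ b ⊆ Icc m M) {t : ℝ} (ht : t ∈ Icc (0:ℝ) 1) :
    spectrum ℝ ((1 - t) • a + t • b) ⊆ Icc m M := by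
  rw [spectrum_subset_Icc_iff ha] at hsa
  rw [spectrum_subset_Icc_iff hb] at hsb
  rw [spectrum_subset_Icc_iff (ha.convexCombo hb t)]
  exact convex_Icc _ _ hsa hsb (sub_nonneg.2 ht.2) ht.1 (sub_add_cancel 1 t)

variable {I : Set ℝ} (hI : I.OrdConnected) (ha : IsSelfAdjoint a) (hb : IsSelfAdjoint b)
  (hsa : spectrum ℝ a ⊆ I) (hsb : spectrum ℝ b ⊆ I)
include hI ha hb hsa hsb

theorem spectrum_convexCombo_subset {t : ℝ} (ht : t ∈ Icc (0:ℝ) 1) :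
    spectrum ℝ ((1 - t) • a + t • b) ⊆ I := by
  obtain ⟨m, M, hmI, ham, hbm⟩ := exists_Icc_subset_of_spectrum_subset hI hsa hsb
  exact (spectrum_convexCombo_subset_Icc ha hb ham hbm ht).trans hmI

theorem spectrum_midpoint_subset : spectrum ℝ ((2:ℝ)⁻¹ • (a + b)) ⊆ I := by
  rw [show (2:ℝ)⁻¹ • (a + b) = (1 - 2⁻¹ : ℝ) • a + (2⁻¹ : ℝ) • b by module]
  exact spectrum_convexCombo_subset hI ha hb hsa hsb ⟨by norm_num, by norm_num⟩

theorem intervalIntegrable_cfc_convexCombo {f : ℝ → ℝ} (hf : ContinuousOn f I) :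
    IntervalIntegrable (fun t : ℝ => cfc f ((1 - t) • a + t • b)) volume 0 1 := by
  obtain ⟨m, M, hmI, ham, hbm⟩ := exists_Icc_subset_of_spectrum_subset hI hsa hsb
  refine ContinuousOn.intervalIntegrable_of_Icc zero_le_one ?_
  exact ContinuousOn.cfc' isCompact_Icc f (by fun_prop)
    (fun t ht => spectrum_convexCombo_subset_Icc ha hb ham hbm ht)
    (fun t _ => ha.convexCombo hb t) (hf.mono hmI)

end CStarAlgebra

namespace IsOperatorConvexOn

variable {A : Type*} [CStarAlgebra A] [PartialOrder A] {a b : A} {I : Set ℝ} {f : ℝ → ℝ}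

theorem cfc_midpoint_le (hconv : IsOperatorConvexOn A I f) (ha : IsSelfAdjoint a)
    (hb : IsSelfAdjoint b) (hsa : spectrum ℝ a ⊆ I) (hsb : spectrum ℝ b ⊆ I) :
    cfc f ((2:ℝ)⁻¹ • (a + b)) ≤ (2:ℝ)⁻¹ • (cfc f a + cfc f b) := by
  have h := hconv a b ha hb hsa hsb 2⁻¹ ⟨by norm_num, by norm_num⟩
  rwa [show (1 - 2⁻¹ : ℝ) = 2⁻¹ by norm_num, ← smul_add, ← smul_add] at h

variable [StarOrderedRing A] (hconv : IsOperatorConvexOn A I f) (hI : I.OrdConnected)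
  (hf : ContinuousOn f I) (ha : IsSelfAdjoint a) (hb : IsSelfAdjoint b)
  (hsa : spectrum ℝ a ⊆ I) (hsb : spectrum ℝ b ⊆ I)
include hconv hI hf ha hb hsa hsb

theorem cfc_midpoint_le_integral :
    cfc f ((2:ℝ)⁻¹ • (a + b)) ≤ ∫ t in (0:ℝ)..1, cfc f ((1 - t) • a + t • b) := by
  set F : ℝ → A := fun t => cfc f ((1 - t) • a + t • b)
  have hF : IntervalIntegrable F volume 0 1 :=
    intervalIntegrable_cfc_convexCombo hI ha hb hsa hsb hf
  have hFrev : IntervalIntegrable (fun t => F (1 - t)) volume 0 1 := by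
    simpa using (hF.comp_sub_left 1).symm
  calc cfc f ((2:ℝ)⁻¹ • (a + b)) = ∫ _ in (0:ℝ)..1, cfc f ((2:ℝ)⁻¹ • (a + b)) := by simp
    _ ≤ ∫ t in (0:ℝ)..1, (2:ℝ)⁻¹ • (F t + F (1 - t)) := by
      refine intervalIntegral.integral_mono_on_of_isOrderedModule zero_le_one
        intervalIntegrable_const ((hF.add hFrev).smul _) fun t ht => ?_
      have ht' : 1 - t ∈ Icc (0:ℝ) 1 := ⟨sub_nonneg.2 ht.2, by linarith [ht.1]⟩
      have hmid : (2:ℝ)⁻¹ • (a + b) =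
          (2:ℝ)⁻¹ • ((1 - t) • a + t • b + ((1 - (1 - t)) • a + (1 - t) • b)) := by module
      rw [hmid]
      exact hconv.cfc_midpoint_le (ha.convexCombo hb t) (ha.convexCombo hb (1 - t))
        (spectrum_convexCombo_subset hI ha hb hsa hsb ht)
        (spectrum_convexCombo_subset hI ha hb hsa hsb ht')
    _ = ∫ t in (0:ℝ)..1, F t := by
      rw [intervalIntegral.integral_smul, intervalIntegral.integral_add hF hFrev,
        intervalIntegral.integral_comp_sub_left F 1]
      norm_num
      module

theorem integral_le_average :
    ∫ t in (0:ℝ)..1, cfc f ((1 - t) • a + t • b) ≤ (2:ℝ)⁻¹ • (cfc f a + cfc f b) := by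
  rw [← integral_convexCombo]
  exact intervalIntegral.integral_mono_on_of_isOrderedModule zero_le_one
    (intervalIntegrable_cfc_convexCombo hI ha hb hsa hsb hf)
    ((by fun_prop : Continuous _).intervalIntegrable _ _)
    fun t ht => hconv a b ha hb hsa hsb t ht

end IsOperatorConvexOn

/-- Dragomir: Refined Hermite–Hadamard chain for an operator convex
function `f` on an interval `I`:
`f((A+B)/2) ≤ (1/2)[f((3A+B)/4) + f((A+3B)/4)] ≤ ∫₀¹ f((1−t)A + tB) dt
  ≤ (1/2)[f((A+B)/2) + (f(A)+f(B))/2] ≤ (f(A)+f(B))/2` in the operator order. -/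
theorem hermite_hadamard_chain_operator_convex
    {H : Type*} [NormedAddCommGroup H] [InnerProductSpace ℂ H] [CompleteSpace H]
    (I : Set ℝ) (hI : I.OrdConnected)
    (f : ℝ → ℝ) (hf : ContinuousOn f I)
    (hconvex : ∀ A B : H →L[ℂ] H, IsSelfAdjoint A → IsSelfAdjoint B →
      spectrum ℝ A ⊆ I → spectrum ℝ B ⊆ I → ∀ lam ∈ Set.Icc (0:ℝ) 1,
        cfc f ((1 - lam) • A + lam • B) ≤ (1 - lam) • cfc f A + lam • cfc f B) :
    ∀ A B : H →L[ℂ] H, IsSelfAdjoint A → IsSelfAdjoint B →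
      spectrum ℝ A ⊆ I → spectrum ℝ B ⊆ I →
      cfc f ((2:ℝ)⁻¹ • (A + B)) ≤
        (2:ℝ)⁻¹ • (cfc f ((4:ℝ)⁻¹ • ((3:ℝ) • A + B)) + cfc f ((4:ℝ)⁻¹ • (A + (3:ℝ) • B))) ∧
      (2:ℝ)⁻¹ • (cfc f ((4:ℝ)⁻¹ • ((3:ℝ) • A + B)) + cfc f ((4:ℝ)⁻¹ • (A + (3:ℝ) • B))) ≤
        (∫ t in (0:ℝ)..1, cfc f ((1 - t) • A + t • B)) ∧
      (∫ t in (0:ℝ)..1, cfc f ((1 - t) • A + t • B)) ≤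
        (2:ℝ)⁻¹ • (cfc f ((2:ℝ)⁻¹ • (A + B)) + (2:ℝ)⁻¹ • (cfc f A + cfc f B)) ∧
      (2:ℝ)⁻¹ • (cfc f ((2:ℝ)⁻¹ • (A + B)) + (2:ℝ)⁻¹ • (cfc f A + cfc f B)) ≤
        (2:ℝ)⁻¹ • (cfc f A + cfc f B) := by
  intro A B hA hB hAI hBI
  have hconv : IsOperatorConvexOn (H →L[ℂ] H) I f := hconvex
  have hCI := spectrum_midpoint_subset hI hA hB hAI hBI
  have hsplit := integral_comp_convexCombo_eq_halves (cfc f) A B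
    (intervalIntegrable_cfc_convexCombo hI hA hB hAI hBI hf)
  set C := (2:ℝ)⁻¹ • (A + B) with hC
  have hCsa : IsSelfAdjoint C := (IsSelfAdjoint.all _).smul (hA.add hB)
  rw [show (4:ℝ)⁻¹ • ((3:ℝ) • A + B) = (2:ℝ)⁻¹ • (A + C) by module,
    show (4:ℝ)⁻¹ • (A + (3:ℝ) • B) = (2:ℝ)⁻¹ • (C + B) by module, hsplit]
  have hPI := spectrum_midpoint_subset hI hA hCsa hAI hCI
  have hQI := spectrum_midpoint_subset hI hCsa hB hCI hBI
  refine ⟨?_, ?_, ?_, ?_⟩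
  · calc cfc f C = cfc f ((2:ℝ)⁻¹ • ((2:ℝ)⁻¹ • (A + C) + (2:ℝ)⁻¹ • (C + B))) := by
          rw [hC]; congr 1; module
      _ ≤ _ := hconv.cfc_midpoint_le ((IsSelfAdjoint.all _).smul (hA.add hCsa))
          ((IsSelfAdjoint.all _).smul (hCsa.add hB)) hPI hQI
  · rw [smul_add]
    gcongr
    · exact hconv.cfc_midpoint_le_integral hI hf hA hCsa hAI hCI
    · exact hconv.cfc_midpoint_le_integral hI hf hCsa hB hCI hBI
  · calc _ ≤ (2:ℝ)⁻¹ • ((2:ℝ)⁻¹ • (cfc f A + cfc f C)) +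
          (2:ℝ)⁻¹ • ((2:ℝ)⁻¹ • (cfc f C + cfc f B)) := by
          gcongr
          · exact hconv.integral_le_average hI hf hA hCsa hAI hCI
          · exact hconv.integral_le_average hI hf hCsa hB hCI hBI
      _ = _ := by module
  · calc _ ≤ (2:ℝ)⁻¹ • ((2:ℝ)⁻¹ • (cfc f A + cfc f B) + (2:ℝ)⁻¹ • (cfc f A + cfc f B)) := by
          gcongr
          exact hconv.cfc_midpoint_le hA hB hAI hBI
      _ = _ := by module
end
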